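/- Let n be even and let x satisfy 6 ≤ x ≤ n-4. Then the sequence (n-4, n-4, n-4, x-3, …, x-3) of length n-3 (with n-6 copies of x-3) is graphic. -/

import Mathlib

/-!
Three vertices adjacent to everything else, joined to an `(x - 6)`-regular graph on the remaining
`n - 6` vertices, realize the sequence. Since `n - 6` is even, such a regular graph exists for every
degree `d < n - 6`: for `d = 2e` take the circulant graph on `ZMod (n - 6)` with jumps `±1, …, ±e`;
for odd `d` take jumps outside `{-e, …, e}`, for the `e` with `2e + 1 = n - 6 - d`.
-/

/-- A finite list of naturals is graphic if it is realized as the degree sequence of a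
simple graph. -/
def IsGraphicList (l : List ℕ) : Prop :=
  ∃ (G : SimpleGraph (Fin l.length)) (_ : DecidableRel G.Adj), ∀ i, G.degree i = l.get i

open Finset Fintype

namespace SimpleGraph

variable {V W : Type*} {G : SimpleGraph V} {H : SimpleGraph W}

theorem degree_sum_inl (v : V) [Fintype (G.neighborSet v)]
    [Fintype ((G ⊕g H).neighborSet (.inl v))] : (G ⊕g H).degree (.inl v) = G.degree v := by
  simp only [← card_neighborSet_eq_degree]
  exact Fintype.card_congr <| (Equiv.setCongr (neighborSet_sum_inl v)).trans
    (Equiv.Set.image _ _ Sum.inl_injective).symm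

theorem degree_sum_inr (w : W) [Fintype (H.neighborSet w)]
    [Fintype ((G ⊕g H).neighborSet (.inr w))] : (G ⊕g H).degree (.inr w) = H.degree w := by
  simp only [← card_neighborSet_eq_degree]
  exact Fintype.card_congr <| (Equiv.setCongr (neighborSet_sum_inr w)).trans
    (Equiv.Set.image _ _ Sum.inr_injective).symm

theorem circulantGraph_isRegularOfDegree {A : Type*} [AddGroup A] [Fintype A] [DecidableEq A]
    {s : Finset A} (hs : ∀ a ∈ s, -a ∈ s) (h0 : 0 ∉ s) :
    (circulantGraph (s : Set A)).IsRegularOfDegree #s := by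
  intro v
  have hnbr :
      (circulantGraph (s : Set A)).neighborFinset v = s.map (Equiv.addRight v).toEmbedding := by
    ext w
    have hsymm : v - w ∈ s ↔ w - v ∈ s :=
      ⟨fun h => by simpa using hs _ h, fun h => by simpa using hs _ h⟩
    simp only [mem_neighborFinset, circulantGraph_adj, mem_coe, mem_map_equiv,
      Equiv.addRight_symm, Equiv.coe_addRight, ← sub_eq_add_neg, hsymm, or_self,
      and_iff_right_iff_imp]
    rintro h rfl
    exact h0 (by simpa using h)
  rw [← card_neighborFinset_eq_degree, hnbr, card_map]

end SimpleGraph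

namespace ZMod

variable {m e : ℕ}

theorem intCast_injOn_Icc {a b : ℤ} (h : b - a < m) :
    Set.InjOn (Int.cast : ℤ → ZMod m) (Set.Icc a b) := by
  intro x hx y hy hxy
  rw [intCast_eq_intCast_iff_dvd_sub] at hxy
  have := Int.eq_zero_of_abs_lt_dvd hxy (abs_lt.2 ⟨by grind, by grind⟩)
  omega

noncomputable def centeredInterval (m e : ℕ) : Finset (ZMod m) :=
  (Icc (-e : ℤ) e).image Int.cast

theorem zero_mem_centeredInterval : (0 : ZMod m) ∈ centeredInterval m e :=
  mem_image.2 ⟨0, by simp, Int.cast_zero⟩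

theorem neg_mem_centeredInterval {a : ZMod m} (ha : a ∈ centeredInterval m e) :
    -a ∈ centeredInterval m e := by
  obtain ⟨i, hi, rfl⟩ := mem_image.1 ha
  exact mem_image.2 ⟨-i, by simp only [mem_Icc] at hi ⊢; omega, Int.cast_neg i⟩

theorem card_centeredInterval (h : 2 * e < m) : #(centeredInterval m e) = 2 * e + 1 := by
  rw [centeredInterval, card_image_of_injOn, Int.card_Icc]
  · omega
  · rw [coe_Icc]
    exact intCast_injOn_Icc (by omega)

theorem exists_symmetric_finset_card {d : ℕ} (hm : Even m) (hd : d < m) :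
    ∃ s : Finset (ZMod m), (∀ a ∈ s, -a ∈ s) ∧ 0 ∉ s ∧ #s = d := by
  obtain ⟨e, rfl | rfl⟩ := Nat.even_or_odd' d
  · refine ⟨(centeredInterval m e).erase 0, fun a ha => ?_, notMem_erase 0 _, ?_⟩
    · obtain ⟨ha0, ha⟩ := mem_erase.1 ha
      exact mem_erase.2 ⟨neg_ne_zero.2 ha0, neg_mem_centeredInterval ha⟩
    · rw [card_erase_of_mem zero_mem_centeredInterval, card_centeredInterval (by omega)]
      rfl
  · obtain ⟨k, rfl⟩ := hm
    have : NeZero (k + k) := ⟨by omega⟩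
    refine ⟨(centeredInterval (k + k) (k - 1 - e))ᶜ, fun a ha => ?_, ?_, ?_⟩
    · rw [mem_compl] at ha ⊢
      exact fun h => ha (by simpa using neg_mem_centeredInterval h)
    · simpa using zero_mem_centeredInterval
    · rw [card_compl, ZMod.card, card_centeredInterval (by omega)]
      omega

end ZMod

theorem isGraphicList_of_equiv {l : List ℕ} {V : Type*} [Fintype V] (G : SimpleGraph V)
    [DecidableRel G.Adj] (e : Fin l.length ≃ V) (h : ∀ i, G.degree (e i) = l.get i) :
    IsGraphicList l :=
  ⟨G.comap e, inferInstance, fun i => by rw [← h, ← (SimpleGraph.Iso.comap e G).degree_eq]; rfl⟩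

theorem isGraphicList_replicate_append_replicate {V W : Type*} [Fintype V] [Fintype W]
    (G : SimpleGraph (V ⊕ W)) [DecidableRel G.Adj] {a b : ℕ}
    (ha : ∀ v, G.degree (.inl v) = a) (hb : ∀ w, G.degree (.inr w) = b) :
    IsGraphicList (List.replicate (card V) a ++ List.replicate (card W) b) := by
  have hdeg : ∀ x, G.degree x = Sum.elim (fun _ => a) (fun _ => b) x := by
    rintro (v | w)
    exacts [ha v, hb w]
  have hlen : (List.replicate (card V) a ++ List.replicate (card W) b).length = card V + card W := by
    simp
  refine isGraphicList_of_equiv G ((finCongr hlen).trans <| finSumFinEquiv.symm.trans <|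
    (equivFin V).symm.sumCongr (equivFin W).symm) fun i => ?_
  obtain ⟨j, rfl⟩ := (finCongr hlen).symm.surjective i
  rw [hdeg]
  induction j using Fin.addCases with
  | left j => simp [List.getElem_append_left]
  | right j => simp [List.getElem_append_right]

/-- The degree sequence of `(⊥ ⊕g H)ᶜ`, the join of a clique on `V` with the complement of `H`. -/
theorem isGraphicList_of_isRegularOfDegree {V W : Type*} [Fintype V] [Fintype W]
    {H : SimpleGraph W} [DecidableRel H.Adj] {r : ℕ} (hH : H.IsRegularOfDegree r) :
    IsGraphicList (List.replicate (card V) (card V + card W - 1) ++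
      List.replicate (card W) (card V + card W - 1 - r)) := by
  classical
  refine isGraphicList_replicate_append_replicate ((⊥ : SimpleGraph V) ⊕g H)ᶜ
    (fun v => ?_) (fun w => ?_)
  · rw [SimpleGraph.degree_compl, SimpleGraph.degree_sum_inl, SimpleGraph.bot_degree, card_sum]
    rfl
  · rw [SimpleGraph.degree_compl, SimpleGraph.degree_sum_inr, hH.degree_eq, card_sum]

theorem isGraphicList_replicate_append_replicate_of_even {k m d : ℕ} (hm : Even m) (hd : d < m) :
    IsGraphicList (List.replicate k (k + m - 1) ++ List.replicate m (k + d)) := by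
  have : NeZero m := ⟨by omega⟩
  obtain ⟨s, hneg, h0, hs⟩ := ZMod.exists_symmetric_finset_card hm (show m - 1 - d < m by omega)
  have := isGraphicList_of_isRegularOfDegree (V := Fin k)
    (SimpleGraph.circulantGraph_isRegularOfDegree hneg h0)
  rw [Fintype.card_fin, ZMod.card, hs] at this
  convert this using 3
  omega

/-- For even `n` and `6 ≤ x ≤ n-4`, the sequence `(n-4, n-4, n-4, x-3, …, x-3)`
of length `n-3` (with `n-6` copies of `x-3`) is graphic. -/
theorem seq_k3_minus_graphic {n x : ℕ} (hn : Even n) (hx1 : 6 ≤ x) (hx2 : x ≤ n - 4) :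
    IsGraphicList ([n - 4, n - 4, n - 4] ++ List.replicate (n - 6) (x - 3)) := by
  have hm : Even (n - 6) := (Nat.even_sub (by omega)).2 (iff_of_true hn (by decide))
  have hseq : [n - 4, n - 4, n - 4] ++ List.replicate (n - 6) (x - 3) =
      List.replicate 3 (3 + (n - 6) - 1) ++ List.replicate (n - 6) (3 + (x - 6)) := by
    rw [show 3 + (n - 6) - 1 = n - 4 by omega, show 3 + (x - 6) = x - 3 by omega]
    rfl
  rw [hseq]
  exact isGraphicList_replicate_append_replicate_of_even hm (by omega)
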